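/- arXiv:math/0411512 — 5 statements merged into one kernel-verified Lean document; each statement's English description precedes it below -/
import Mathlib

section
/- Let G be a finite abelian group, H ≤ G a subgroup, and A ⊆ H. Then A is spectral in G if and only if A is spectral in H. In particular, if Λ is a set of characters of H forming an orthogonal basis of the functions on A, then extending each character of H to a character of G yields a spectrum of A in G. -/
/-- A finite subset `A` of an abelian group `G` is spectral if there is a set `Λ` of
characters of `G` with `|Λ| = |A|` such that any two distinct characters of `Λ` are
orthogonal when restricted to `A`. -/
def IsSpectral {G : Type*} [AddCommGroup G] (A : Finset G) : Prop :=
  ∃ Λ : Finset (AddChar G ℂ), Λ.card = A.card ∧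
    ∀ χ ∈ Λ, ∀ ψ ∈ Λ, χ ≠ ψ → ∑ a ∈ A, χ a * (starRingEnd ℂ) (ψ a) = 0

/-! Restricting characters along an injective homomorphism `f : H →+ G` of finite abelian
groups is surjective: its kernel consists of the characters of `G ⧸ f.range`, so counting
forces the image to be everything. Orthogonality on `f '' A` only sees the restrictions to `H`,
so lifting a spectrum of `A` in `H` through a section of the restriction gives a spectrum in
`G`. Conversely, two characters with the same restriction to a nonempty `A` are not orthogonal
there (the sum is `|A|`), so restricting a spectrum in `G` loses no characters. -/

open Function

namespace AddChar

variable {G H : Type*} [AddCommGroup G] [AddCommGroup H]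

lemma natCard_eq [Finite G] : Nat.card (AddChar G ℂ) = Nat.card G := by
  have := Fintype.ofFinite G
  rw [Nat.card_eq_fintype_card, Nat.card_eq_fintype_card, card_eq]

lemma sum_mul_conj_self [Finite G] (A : Finset G) (χ : AddChar G ℂ) :
    ∑ a ∈ A, χ a * starRingEnd ℂ (χ a) = A.card := by
  simp [RCLike.mul_conj, norm_apply]

theorem compAddMonoidHom_surjective [Finite G] {f : H →+ G} (hf : Injective f) :
    Surjective fun ψ : AddChar G ℂ => ψ.compAddMonoidHom f := by
  have : Finite H := Finite.of_injective f hf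
  let res : AddChar G ℂ →+ AddChar H ℂ :=
    AddMonoidHom.mk' (fun ψ => ψ.compAddMonoidHom f) fun _ _ => rfl
  have res_apply (ψ : AddChar G ℂ) (x : H) : res ψ x = ψ (f x) := rfl
  let inflate (φ : AddChar (G ⧸ f.range) ℂ) : res.ker :=
    ⟨φ.compAddMonoidHom (QuotientAddGroup.mk' f.range), by
      ext x
      have : (f x : G ⧸ f.range) = 0 := (QuotientAddGroup.eq_zero_iff _).2 ⟨x, rfl⟩
      simp [res_apply, this]⟩
  have inflate_surjective : Surjective inflate := by
    rintro ⟨ψ, hψ⟩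
    refine ⟨toAddMonoidHomEquiv.symm (QuotientAddGroup.lift _ (toAddMonoidHomEquiv ψ) ?_), ?_⟩
    · rintro _ ⟨x, rfl⟩
      simpa [res_apply] using DFunLike.congr_fun hψ x
    · ext; simp [inflate]
  refine AddMonoidHom.surjective_of_card_ker_le_div res ?_
  calc Nat.card res.ker ≤ Nat.card (AddChar (G ⧸ f.range) ℂ) :=
        Nat.card_le_card_of_surjective _ inflate_surjective
    _ = Nat.card G / Nat.card H := by
        rw [natCard_eq, f.range.card_eq_card_quotient_mul_card_addSubgroup,
          Nat.card_congr (AddMonoidHom.ofInjective hf).toEquiv, Nat.mul_div_cancel _ Nat.card_pos]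
    _ = Nat.card (AddChar G ℂ) / Nat.card (AddChar H ℂ) := by rw [natCard_eq, natCard_eq]

end AddChar

section

variable {G H : Type*} [AddCommGroup G] [AddCommGroup H] [Finite G] {f : H →+ G}
  (hf : Injective f) {A : Finset H}

lemma IsSpectral.of_map (h : IsSpectral (A.map ⟨f, hf⟩)) : IsSpectral A := by
  obtain ⟨Λ, hcard, horth⟩ := h
  rcases A.eq_empty_or_nonempty with rfl | hA
  · exact ⟨∅, rfl, by simp⟩
  have hres : ∀ χ ∈ Λ, ∀ ψ ∈ Λ, χ ≠ ψ →
      ∑ a ∈ A, χ.compAddMonoidHom f a * starRingEnd ℂ (ψ.compAddMonoidHom f a) = 0 :=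
    fun χ hχ ψ hψ hne => (Finset.sum_map A _ _).symm.trans (horth χ hχ ψ hψ hne)
  have : Finite H := Finite.of_injective f hf
  have hinj : Set.InjOn (fun ψ : AddChar G ℂ => ψ.compAddMonoidHom f) Λ := by
    intro χ hχ ψ hψ hχψ
    by_contra hne
    have := hres χ hχ ψ hψ hne
    rw [← show _ = ψ.compAddMonoidHom f from hχψ, AddChar.sum_mul_conj_self] at this
    exact hA.card_pos.ne' (by exact_mod_cast this)
  refine ⟨Λ.image _, by rw [Finset.card_image_of_injOn hinj, hcard, Finset.card_map], ?_⟩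
  simp only [Finset.forall_mem_image]
  exact fun χ hχ ψ hψ hne => hres χ hχ ψ hψ (fun h => hne (h ▸ rfl))

lemma IsSpectral.map (h : IsSpectral A) : IsSpectral (A.map ⟨f, hf⟩) := by
  obtain ⟨Λ, hcard, horth⟩ := h
  have hext := AddChar.compAddMonoidHom_surjective hf
  have hext_apply (χ : AddChar H ℂ) (x : H) : surjInv hext χ (f x) = χ x :=
    DFunLike.congr_fun (surjInv_eq hext χ) x
  refine ⟨Λ.image (surjInv hext), ?_, ?_⟩
  · rw [Finset.card_image_of_injective _ (injective_surjInv hext), hcard, Finset.card_map]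
  simp only [Finset.forall_mem_image, Finset.sum_map, Embedding.coeFn_mk, hext_apply]
  exact fun χ hχ ψ hψ hne => horth χ hχ ψ hψ (fun h => hne (h ▸ rfl))

lemma isSpectral_map_iff : IsSpectral (A.map ⟨f, hf⟩) ↔ IsSpectral A :=
  ⟨.of_map hf, .map hf⟩

end

/-- For a subgroup `H` of a finite abelian group `G` and a finite set `A ⊆ H`,
`A` is spectral in `G` if and only if it is spectral in `H`. -/
theorem spectral_in_subgroup_iff {G : Type*} [AddCommGroup G] [Fintype G]
    (H : AddSubgroup G) (A : Finset H) :
    IsSpectral (A.map ⟨fun x : H => (x : G), Subtype.val_injective⟩) ↔ IsSpectral A :=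
  isSpectral_map_iff H.subtype_injective
end

section
/- Let G be a finite abelian group, H ≤ G a subgroup, and A ⊆ H. Then A tiles G by translation if and only if A tiles H by translation. -/
/-- A finite subset `A` of an abelian group `G` tiles `G` by translation if there is a
set `T ⊆ G` such that every element of `G` is uniquely `a + t` with `a ∈ A`, `t ∈ T`. -/
def Tiles {G : Type*} [AddCommGroup G] (A : Finset G) : Prop :=
  ∃ T : Finset G, ∀ g : G, ∃! p : G × G, p.1 ∈ A ∧ p.2 ∈ T ∧ p.1 + p.2 = g

/-! Tilings of `G` by `A` with tiling complement `T` are exactly the `AddSubgroup.IsComplement`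
pairs `(A, T)`. A complement of `A` in `G` meets `H` in a complement of `A` in `H`; conversely, a
complement `T` of `A` in `H` yields the complement `T + R` of `A` in `G`, where `R` is a transversal
of `H` in `G`. -/

open Pointwise

namespace Subgroup

variable {G : Type*} [Group G] {H : Subgroup G}

@[to_additive]
theorem IsComplement.preimage_val {S : Set H} {T : Set G}
    (h : IsComplement (Subtype.val '' S) T) : IsComplement S (Subtype.val ⁻¹' T) := by
  rw [isComplement_iff_existsUnique] at h ⊢
  intro x
  obtain ⟨⟨⟨_, s, hs, rfl⟩, ⟨t, ht⟩⟩, hst : (s : G) * t = x, huniq⟩ := h x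
  have htH : t ∈ H := by
    rw [← inv_mul_eq_of_eq_mul hst.symm]
    exact mul_mem (inv_mem s.2) x.2
  refine ⟨(⟨s, hs⟩, ⟨⟨t, htH⟩, ht⟩), Subtype.ext hst, ?_⟩
  rintro ⟨⟨s', hs'⟩, ⟨t', ht'⟩⟩ hst'
  have h' := huniq (⟨s', s', hs', rfl⟩, ⟨t', ht'⟩) (congrArg Subtype.val hst')
  exact Prod.ext (Subtype.ext (Subtype.ext congr($h'.1.1)))
    (Subtype.ext (Subtype.ext congr($h'.2.1)))

@[to_additive]
theorem IsComplement.image_val_mul {S T : Set H} {R : Set G}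
    (hST : IsComplement S T) (hR : IsComplement (H : Set G) R) :
    IsComplement (Subtype.val '' S) (Subtype.val '' T * R) := by
  rw [isComplement_iff_existsUnique] at hST hR ⊢
  intro g
  obtain ⟨⟨⟨h, hH⟩, ⟨r, hr⟩⟩, hhr : h * r = g, huniqR⟩ := hR g
  obtain ⟨⟨⟨s, hs⟩, ⟨t, ht⟩⟩, hst : s * t = ⟨h, hH⟩, huniqH⟩ := hST ⟨h, hH⟩
  refine ⟨(⟨s, s, hs, rfl⟩, ⟨t * r, Set.mul_mem_mul ⟨t, ht, rfl⟩ hr⟩), ?_, ?_⟩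
  · show (s : G) * (t * r) = g
    rw [← hhr, ← mul_assoc]
    exact congrArg (· * r) (congrArg Subtype.val hst)
  · rintro ⟨⟨_, s', hs', rfl⟩, ⟨_, ⟨_, ⟨t', ht', rfl⟩, r', hr', rfl⟩⟩⟩ hg
    change (s' : G) * (t' * r') = g at hg
    have hr := huniqR (⟨s' * t', (s' * t').2⟩, ⟨r', hr'⟩) ((mul_assoc _ _ _).trans hg)
    obtain rfl : r' = r := congr($hr.2.1)
    have hst' := huniqH (⟨s', hs'⟩, ⟨t', ht'⟩) (Subtype.ext congr($hr.1.1))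
    obtain rfl : s' = s := congr($hst'.1.1)
    obtain rfl : t' = t := congr($hst'.2.1)
    rfl

end Subgroup

theorem AddSubgroup.isComplement_iff_existsUnique_prod {G : Type*} [AddGroup G] {S T : Set G} :
    IsComplement S T ↔ ∀ g, ∃! p : G × G, p.1 ∈ S ∧ p.2 ∈ T ∧ p.1 + p.2 = g := by
  rw [isComplement_iff_existsUnique]
  refine forall_congr' fun g => ⟨?_, ?_⟩
  · rintro ⟨⟨⟨a, ha⟩, ⟨b, hb⟩⟩, hab, huniq⟩
    refine ⟨(a, b), ⟨ha, hb, hab⟩, fun p ⟨hp₁, hp₂, hp⟩ => ?_⟩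
    have h := huniq (⟨p.1, hp₁⟩, ⟨p.2, hp₂⟩) hp
    exact Prod.ext congr($h.1.1) congr($h.2.1)
  · rintro ⟨⟨a, b⟩, ⟨ha, hb, hab⟩, huniq⟩
    refine ⟨(⟨a, ha⟩, ⟨b, hb⟩), hab, fun ⟨⟨a', ha'⟩, ⟨b', hb'⟩⟩ hp => ?_⟩
    have h := huniq (a', b') ⟨ha', hb', hp⟩
    exact Prod.ext (Subtype.ext congr($h.1)) (Subtype.ext congr($h.2))

theorem tiles_iff_exists_isComplement {G : Type*} [AddCommGroup G] [Finite G] (A : Finset G) :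
    Tiles A ↔ ∃ T : Set G, AddSubgroup.IsComplement (A : Set G) T := by
  simp_rw [AddSubgroup.isComplement_iff_existsUnique_prod]
  exact ⟨fun ⟨T, hT⟩ => ⟨T, hT⟩, fun ⟨T, hT⟩ => ⟨T.toFinite.toFinset, by simpa using hT⟩⟩

/-- For a subgroup `H` of a finite abelian group `G` and a finite set `A ⊆ H`,
`A` tiles `G` by translation if and only if it tiles `H` by translation. -/
theorem tiles_subgroup_iff {G : Type*} [AddCommGroup G] [Fintype G]
    (H : AddSubgroup G) (A : Finset H) :
    Tiles (A.map ⟨((↑·) : H → G), Subtype.val_injective⟩) ↔ Tiles A := by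
  rw [tiles_iff_exists_isComplement, tiles_iff_exists_isComplement, Finset.coe_map,
    Function.Embedding.coeFn_mk]
  obtain ⟨R, hR, -⟩ := H.exists_isComplement_right 0
  exact ⟨fun ⟨T, hT⟩ => ⟨_, hT.preimage_val⟩, fun ⟨T, hT⟩ => ⟨_, hT.image_val_add hR⟩⟩
end

section
/- Let A ⊂ (ℤ/8ℤ)^3 be the 6-element set consisting of the columns of the matrix with rows (0,2,4,1,5,6), (0,6,3,4,2,7), (0,6,7,2,4,3), i.e., A = {(0,0,0), (2,6,6), (4,3,7), (1,4,2), (5,2,4), (6,7,3)}, and let L ⊂ (ℤ/8ℤ)^3 be the set of rows of the matrix with rows (0,0,0), (0,1,1), (1,0,0), (0,1,0), (0,0,1), (7,1,1). Then L is a spectrum of A in (ℤ/8ℤ)^3: the 6 × 6 matrix with entries e^{2πi⟨l,a⟩/8}, l ∈ L, a ∈ A, is a complex Hadamard matrix, so A is a spectral set in (ℤ/8ℤ)^3. -/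
open scoped ComplexConjugate

/-- A `k × k` complex matrix is a complex Hadamard matrix if all its entries have
absolute value `1` and `M * Mᴴ = k • 1` (equivalently, rows are pairwise orthogonal). -/
def IsComplexHadamard {k : ℕ} (M : Matrix (Fin k) (Fin k) ℂ) : Prop :=
  (∀ i j, ‖M i j‖ = 1) ∧ M * M.conjTranspose = (k : ℂ) • 1

/-- The columns of `A`: a 6-element subset of `(ℤ/8ℤ)^3`. -/
def aVec : Fin 6 → (Fin 3 → ZMod 8) :=
  ![![0, 0, 0], ![2, 6, 6], ![4, 3, 7], ![1, 4, 2], ![5, 2, 4], ![6, 7, 3]]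

/-- The rows of `L`: a 6-element subset of `(ℤ/8ℤ)^3`. -/
def lVec : Fin 6 → (Fin 3 → ZMod 8) :=
  ![![0, 0, 0], ![0, 1, 1], ![1, 0, 0], ![0, 1, 0], ![0, 0, 1], ![7, 1, 1]]

/-!
Write the character attached to `l` as `a ↦ ψ ⟨l, a⟩`, with `ψ` the standard character of
`ℤ/8ℤ`. For distinct `l, l' ∈ L` the six values `⟨l - l', a⟩`, `a ∈ A`, form a multiset that is
invariant under `x ↦ x + 4`; since `ψ 4 = -1`, the inner product `∑ₐ ψ ⟨l, a⟩ · conj (ψ ⟨l', a⟩)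
= ∑ₐ ψ ⟨l - l', a⟩` equals its own negative, hence vanishes. Six pairwise orthogonal rows of
unimodular entries make a complex Hadamard matrix, and they are six distinct characters, which
is the spectrality of `A`.
-/

open Finset Matrix

namespace AddChar

theorem sum_map_eq_zero_of_map_add_eq_self {G R : Type*} [AddMonoid G] [Ring R]
    [IsAddTorsionFree R] (ψ : AddChar G R) {t : G} (ht : ψ t = -1) {s : Multiset G}
    (hs : s.map (· + t) = s) : (s.map ψ).sum = 0 := by
  refine self_eq_neg.mp ?_
  conv_lhs => rw [← hs]
  simp only [Multiset.map_map, Function.comp_def, map_add_eq_mul, ht, mul_neg_one,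
    Multiset.sum_map_neg]

theorem sum_mul_conj_self_s8 {G ι : Type*} [AddCommGroup G] [Finite G] [Fintype ι]
    (ψ : AddChar G ℂ) (a : ι → G) : ∑ j, ψ (a j) * conj (ψ (a j)) = Fintype.card ι := by
  simp [RCLike.mul_conj, ψ.norm_apply]

section DotProduct

variable {ι R : Type*} [Fintype ι] [CommRing R]

def dotProductChar {M : Type*} [Monoid M] (ψ : AddChar R M) (l : ι → R) : AddChar (ι → R) M :=
  ψ.compAddMonoidHom (AddMonoidHom.mk' (l ⬝ᵥ ·) (dotProduct_add l))

@[simp]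
theorem dotProductChar_apply {M : Type*} [Monoid M] (ψ : AddChar R M) (l a : ι → R) :
    dotProductChar ψ l a = ψ (l ⬝ᵥ a) :=
  rfl

theorem dotProductChar_mul_conj [Finite R] (ψ : AddChar R ℂ) (l l' a : ι → R) :
    dotProductChar ψ l a * conj (dotProductChar ψ l' a) = dotProductChar ψ (l - l') a := by
  rw [dotProductChar_apply, dotProductChar_apply, dotProductChar_apply, ← ψ.map_neg_eq_conj,
    ← map_add_eq_mul, sub_dotProduct, sub_eq_add_neg]

end DotProduct

end AddChar

section Orthogonal

variable {G : Type*} [AddCommGroup G] [Finite G] {k : ℕ} (χ : Fin k → AddChar G ℂ) (a : Fin k → G)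

theorem isComplexHadamard_of_orthogonal
    (h : ∀ m m', m ≠ m' → ∑ j, χ m (a j) * conj (χ m' (a j)) = 0) :
    IsComplexHadamard (Matrix.of fun m j => χ m (a j)) := by
  refine ⟨fun m j => (χ m).norm_apply (a j), ?_⟩
  ext m m'
  simp only [mul_apply, conjTranspose_apply, of_apply, RCLike.star_def, Matrix.smul_apply,
    one_apply]
  split_ifs with hmm
  · simp [hmm, AddChar.sum_mul_conj_self_s8]
  · simp [h m m' hmm]

theorem isSpectral_image_of_orthogonal [DecidableEq G] (ha : Function.Injective a)
    (h : ∀ m m', m ≠ m' → ∑ j, χ m (a j) * conj (χ m' (a j)) = 0) :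
    IsSpectral (univ.image a) := by
  classical
  have hχ : Function.Injective χ := by
    intro m m' hmm
    by_contra hne
    have hk : (k : ℂ) ≠ 0 := Nat.cast_ne_zero.mpr (Fin.pos m).ne'
    simpa [← hmm, AddChar.sum_mul_conj_self_s8, hk] using h m m' hne
  refine ⟨univ.image χ, by rw [card_image_of_injective _ hχ, card_image_of_injective _ ha], ?_⟩
  simp only [mem_image, mem_univ, true_and, forall_exists_index, forall_apply_eq_imp_iff]
  intro m m' hne
  rw [sum_image fun x _ y _ hxy => ha hxy]
  exact h m m' (ne_of_apply_ne χ hne)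

end Orthogonal

theorem ZMod.stdAddChar_four : ZMod.stdAddChar (4 : ZMod 8) = -1 := by
  rw [ZMod.stdAddChar_apply, ZMod.toCircle_apply, ← Complex.exp_pi_mul_I]
  congr 1
  rw [show (4 : ZMod 8).val = 4 from rfl]
  push_cast
  ring

theorem aVec_injective : Function.Injective aVec := by decide

theorem map_add_four_lVec_sub_dotProduct_aVec :
    ∀ m m', m ≠ m' →
      (univ.val.map fun j => (lVec m - lVec m') ⬝ᵥ aVec j).map (· + 4) =
        univ.val.map fun j => (lVec m - lVec m') ⬝ᵥ aVec j := by
  decide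

theorem lVec_orthogonal_on_aVec (m m' : Fin 6) (hne : m ≠ m') :
    ∑ j, AddChar.dotProductChar ZMod.stdAddChar (lVec m) (aVec j) *
      conj (AddChar.dotProductChar ZMod.stdAddChar (lVec m') (aVec j)) = 0 := by
  have := AddChar.sum_map_eq_zero_of_map_add_eq_self _ ZMod.stdAddChar_four
    (map_add_four_lVec_sub_dotProduct_aVec m m' hne)
  simp_rw [AddChar.dotProductChar_mul_conj]
  simpa only [AddChar.dotProductChar_apply, sum_eq_multiset_sum, Multiset.map_map,
    Function.comp_def] using this

/-- `L` is a spectrum of `A` in `(ℤ/8ℤ)^3`: the `6 × 6` matrix with entries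
`e^{2πi⟨l,a⟩/8}` is a complex Hadamard matrix, and hence `A` is spectral. -/
theorem lVec_spectrum_of_aVec :
    IsComplexHadamard
      (Matrix.of fun m j : Fin 6 =>
        Complex.exp (2 * Real.pi * Complex.I *
          ((∑ i, lVec m i * aVec j i).val : ℂ) / 8)) ∧
    IsSpectral (Finset.univ.image aVec) := by
  refine ⟨?_, isSpectral_image_of_orthogonal _ _ aVec_injective lVec_orthogonal_on_aVec⟩
  convert isComplexHadamard_of_orthogonal _ _ lVec_orthogonal_on_aVec using 1
  ext m j
  rw [of_apply, of_apply, AddChar.dotProductChar_apply, ZMod.stdAddChar_apply,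
    ZMod.toCircle_apply]
  norm_num [dotProduct]
end

section
/- There exists a 6-element subset A of the finite abelian group (ℤ/8ℤ)^3 that is spectral in (ℤ/8ℤ)^3 but does not tile (ℤ/8ℤ)^3 by translation. (In particular, no 6-element subset of (ℤ/8ℤ)^3 can tile it, since 6 does not divide 512 = |(ℤ/8ℤ)^3|.) -/
open Finset Matrix

/-- A tiling `A ⊕ T = G` puts `A × T` in bijection with `G`. -/
theorem Tiles.card_dvd_card {G : Type*} [AddCommGroup G] [Fintype G] {A : Finset G}
    (hA : Tiles A) : #A ∣ Fintype.card G := by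
  obtain ⟨T, hT⟩ := hA
  refine ⟨#T, ?_⟩
  rw [← card_product, ← card_univ]
  refine (card_nbij (fun p => p.1 + p.2) (fun _ _ => mem_univ _) ?_ ?_).symm
  · intro p hp q hq hpq
    rw [mem_coe, mem_product] at hp hq
    obtain ⟨r, -, hr⟩ := hT (p.1 + p.2)
    rw [hr p ⟨hp.1, hp.2, rfl⟩, hr q ⟨hq.1, hq.2, hpq.symm⟩]
  · intro g _
    obtain ⟨p, ⟨hp₁, hp₂, hp₃⟩, -⟩ := hT g
    exact ⟨p, mem_product.2 ⟨hp₁, hp₂⟩, hp₃⟩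

/-- Pairwise orthogonality forces the characters to be distinct, so `B` and `Λ` have the same
size. -/
theorem isSpectral_of_orthogonal {G ι : Type*} [AddCommGroup G] [Finite G] {A : Finset G}
    (B : Finset ι) (χ : ι → AddChar G ℂ) (hcard : #B = #A)
    (horth : ∀ b ∈ B, ∀ b' ∈ B, b ≠ b' → ∑ a ∈ A, χ b a * starRingEnd ℂ (χ b' a) = 0) :
    IsSpectral A := by
  classical
  have hinj : Set.InjOn χ B := by
    intro b hb b' hb' hχ
    by_contra hne
    have hzero := horth b hb b' (mem_coe.1 hb') hne
    simp only [← hχ, Complex.mul_conj, Complex.normSq_eq_norm_sq, AddChar.norm_apply, one_pow,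
      Complex.ofReal_one, sum_const, nsmul_eq_mul, mul_one, Nat.cast_eq_zero] at hzero
    exact (card_ne_zero_of_mem hb).symm (hcard.trans hzero).symm
  refine ⟨B.image χ, (card_image_of_injOn hinj).trans hcard, ?_⟩
  simp only [mem_image]
  rintro _ ⟨b, hb, rfl⟩ _ ⟨b', hb', rfl⟩ hne
  exact horth b hb b' hb' (ne_of_apply_ne χ hne)

theorem AddChar.sum_map_eq_zero_of_map_add_eq {H M : Type*} [AddMonoid H] [CommRing M]
    [IsDomain M] (ψ : AddChar H M) {m : Multiset H} {h : H} (hm : m.map (· + h) = m)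
    (hψ : ψ h ≠ 1) : (m.map ψ).sum = 0 := by
  have hshift : (m.map ψ).sum = ψ h * (m.map ψ).sum := by
    conv_lhs => rw [← hm]
    simp only [Multiset.map_map, Function.comp_def, AddChar.map_add_eq_mul,
      Multiset.sum_map_mul_left, mul_comm (ψ _) (ψ h)]
  have hfactor : (ψ h - 1) * (m.map ψ).sum = 0 := by linear_combination -hshift
  exact (mul_eq_zero.1 hfactor).resolve_left (sub_ne_zero.2 hψ)

section DotProductCharacters

variable {ι : Type*} [Fintype ι] {N : ℕ} [NeZero N]

noncomputable def dotProductChar (b : ι → ZMod N) : AddChar (ι → ZMod N) ℂ where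
  toFun a := ZMod.stdAddChar (b ⬝ᵥ a)
  map_zero_eq_one' := by simp
  map_add_eq_mul' a a' := by simp [dotProduct_add, AddChar.map_add_eq_mul]

theorem dotProductChar_mul_conj (b b' a : ι → ZMod N) :
    dotProductChar b a * starRingEnd ℂ (dotProductChar b' a) =
      ZMod.stdAddChar ((b - b') ⬝ᵥ a) := by
  rw [← AddChar.map_neg_eq_conj]
  change ZMod.stdAddChar (b ⬝ᵥ a) * ZMod.stdAddChar (b' ⬝ᵥ -a) = _
  rw [← AddChar.map_add_eq_mul, sub_dotProduct, dotProduct_neg, sub_eq_add_neg]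

theorem isSpectral_of_dotProduct_map_add_eq {A B : Finset (ι → ZMod N)} (hcard : #B = #A)
    {h : ZMod N} (hh : h ≠ 0)
    (hinv : ∀ b ∈ B, ∀ b' ∈ B, b ≠ b' →
      (A.val.map ((b - b') ⬝ᵥ ·)).map (· + h) = A.val.map ((b - b') ⬝ᵥ ·)) :
    IsSpectral A := by
  refine isSpectral_of_orthogonal B dotProductChar hcard fun b hb b' hb' hne => ?_
  have hstd : ZMod.stdAddChar (N := N) h ≠ 1 := by
    rwa [← AddChar.map_zero_eq_one (ZMod.stdAddChar (N := N)), ZMod.injective_stdAddChar.ne_iff]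
  simpa only [dotProductChar_mul_conj, Multiset.map_map, Function.comp_def, sum_map_val] using
    ZMod.stdAddChar.sum_map_eq_zero_of_map_add_eq (hinv b hb b' hb' hne) hstd

end DotProductCharacters

def spectralNonTile : Finset (Fin 3 → ZMod 8) :=
  {![0, 0, 0], ![5, 2, 5], ![5, 0, 4], ![2, 1, 4], ![0, 2, 5], ![5, 5, 7]}

def spectrumOfSpectralNonTile : Finset (Fin 3 → ZMod 8) :=
  {![0, 0, 0], ![1, 0, 1], ![2, 7, 6], ![4, 7, 4], ![5, 6, 1], ![6, 6, 2]}

set_option maxRecDepth 20000 in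
theorem dotProduct_spectralNonTile_map_add_four :
    ∀ b ∈ spectrumOfSpectralNonTile, ∀ b' ∈ spectrumOfSpectralNonTile, b ≠ b' →
      (spectralNonTile.val.map ((b - b') ⬝ᵥ ·)).map (· + 4) =
        spectralNonTile.val.map ((b - b') ⬝ᵥ ·) := by
  decide

theorem card_spectralNonTile : #spectralNonTile = 6 := by decide

theorem isSpectral_spectralNonTile : IsSpectral spectralNonTile :=
  isSpectral_of_dotProduct_map_add_eq (by decide) (by decide)
    dotProduct_spectralNonTile_map_add_four

theorem not_tiles_spectralNonTile : ¬ Tiles spectralNonTile := by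
  intro htiles
  have hdvd := htiles.card_dvd_card
  rw [card_spectralNonTile, Fintype.card_fun, ZMod.card, Fintype.card_fin] at hdvd
  norm_num at hdvd

/-- There is a 6-element subset of `(ℤ/8ℤ)^3` which is spectral but does not tile. -/
theorem exists_spectral_non_tile_Z8cubed :
    ∃ A : Finset (Fin 3 → ZMod 8), A.card = 6 ∧ IsSpectral A ∧ ¬ Tiles A :=
  ⟨spectralNonTile, card_spectralNonTile, isSpectral_spectralNonTile, not_tiles_spectralNonTile⟩
end

section
/- For every n ≥ 1 and every m > n^3, there exists an injective map φ : {1, …, n} → ℤ/mℤ such that all pairwise differences φ(i) − φ(j) with i ≠ j are distinct; that is, φ(i) − φ(j) = φ(k) − φ(l) with i ≠ j and k ≠ l implies i = k and j = l (the image of φ is a Sidon set in ℤ/mℤ of size n). -/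
lemma zmod_sidon_of_nat (n m : ℕ) (a : Fin n → ℕ)
    (hb : ∀ i, 2 * a i < m)
    (hs : ∀ i j k l : Fin n, i ≠ j → k ≠ l →
      (a i : ℤ) - a j = (a k : ℤ) - a l → i = k ∧ j = l) :
    ∃ φ : Fin n → ZMod m, Function.Injective φ ∧
      ∀ i j k l : Fin n, i ≠ j → k ≠ l → φ i - φ j = φ k - φ l → i = k ∧ j = l := by
  refine ⟨fun i => ((a i : ℤ) : ZMod m), ?_, ?_⟩
  · intro i j hij
    by_contra hne
    have hdvd : (m : ℤ) ∣ (a i : ℤ) - a j := by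
      have := (ZMod.intCast_eq_intCast_iff _ _ _).mp hij
      exact Int.ModEq.dvd this.symm
    have h0 : (a i : ℤ) - a j = 0 := by
      refine Int.eq_zero_of_abs_lt_dvd hdvd ?_
      have h1 := hb i; have h2 := hb j
      rw [abs_lt]
      constructor <;> omega
    have : (a i : ℤ) - a j = (a j : ℤ) - a i := by omega
    exact hne (hs i j j i hne (Ne.symm hne) this).1
  · intro i j k l hij hkl heq
    have hdvd : (m : ℤ) ∣ ((a i : ℤ) - a j) - ((a k : ℤ) - a l) := by
      have : (((a i : ℤ) - a j : ℤ) : ZMod m) = (((a k : ℤ) - a l : ℤ) : ZMod m) := by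
        push_cast
        push_cast at heq
        exact heq
      exact Int.ModEq.dvd ((ZMod.intCast_eq_intCast_iff _ _ _).mp this).symm
    have h0 : ((a i : ℤ) - a j) - ((a k : ℤ) - a l) = 0 := by
      refine Int.eq_zero_of_abs_lt_dvd hdvd ?_
      have h1 := hb i; have h2 := hb j; have h3 := hb k; have h4 := hb l
      rw [abs_lt]
      constructor <;> omega
    exact hs i j k l hij hkl (by omega)


def mc7 : Fin 7 → ℕ := ![0, 1, 3, 7, 12, 20, 30]

lemma mc7_sidon : ∀ i j k l : Fin 7, i ≠ j → k ≠ l →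
    mc7 i + mc7 l = mc7 k + mc7 j → i = k ∧ j = l := by decide

lemma mc7_bound : ∀ i : Fin 7, 2 * mc7 i ≤ (i.val + 1) ^ 3 := by decide


lemma et_sidon (n p : ℕ) (hp : p.Prime) (hnp : n < p) (hp2 : 2 < p) :
    ∀ i j k l : Fin n, i ≠ j → k ≠ l →
      ((2 * p * i.val + i.val ^ 2 % p : ℕ) : ℤ) - (2 * p * j.val + j.val ^ 2 % p : ℕ) =
      ((2 * p * k.val + k.val ^ 2 % p : ℕ) : ℤ) - (2 * p * l.val + l.val ^ 2 % p : ℕ) →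
      i = k ∧ j = l := by
  intro i j k l hij hkl heq
  haveI : Fact p.Prime := ⟨hp⟩
  have hri : i.val ^ 2 % p < p := Nat.mod_lt _ hp.pos
  have hrj : j.val ^ 2 % p < p := Nat.mod_lt _ hp.pos
  have hrk : k.val ^ 2 % p < p := Nat.mod_lt _ hp.pos
  have hrl : l.val ^ 2 % p < p := Nat.mod_lt _ hp.pos
  push_cast at heq
  -- 2p * t = R
  have key : (2 * p : ℤ) * ((i.val : ℤ) + l.val - j.val - k.val)
      = ((j.val ^ 2 % p : ℕ) : ℤ) + ((k.val ^ 2 % p : ℕ) : ℤ)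
        - ((i.val ^ 2 % p : ℕ) : ℤ) - ((l.val ^ 2 % p : ℕ) : ℤ) := by
    push_cast
    linarith [heq]
  have ht0 : (2 * p : ℤ) * ((i.val : ℤ) + l.val - j.val - k.val) = 0 := by
    refine Int.eq_zero_of_abs_lt_dvd ⟨_, rfl⟩ ?_
    rw [key, abs_lt]
    constructor <;> omega
  have ht : (i.val : ℤ) + l.val - j.val - k.val = 0 := by
    rcases mul_eq_zero.mp ht0 with h | h
    · exfalso; omega
    · exact h
  have hsum : i.val + l.val = j.val + k.val := by omega
  have hres : i.val ^ 2 % p + l.val ^ 2 % p = j.val ^ 2 % p + k.val ^ 2 % p := by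
    rw [ht0] at key
    omega
  have hmod : (i.val ^ 2 + l.val ^ 2) % p = (j.val ^ 2 + k.val ^ 2) % p := by
    conv_lhs => rw [Nat.add_mod]
    conv_rhs => rw [Nat.add_mod]
    rw [hres]
  have e1 : (i.val : ZMod p) + (l.val : ZMod p) = (j.val : ZMod p) + (k.val : ZMod p) := by
    have := congrArg (fun t : ℕ => (t : ZMod p)) hsum
    push_cast at this
    exact this
  have e2 : (i.val : ZMod p) ^ 2 + (l.val : ZMod p) ^ 2
      = (j.val : ZMod p) ^ 2 + (k.val : ZMod p) ^ 2 := by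
    have := (ZMod.natCast_eq_natCast_iff _ _ _).mpr hmod
    push_cast at this
    exact this
  have h2 : (2 : ZMod p) ≠ 0 := by
    have : ((2 : ℕ) : ZMod p) ≠ 0 := by
      rw [Ne, ZMod.natCast_eq_zero_iff]
      intro h
      have := Nat.le_of_dvd (by norm_num) h
      omega
    simpa using this
  have hX : ((i.val : ZMod p) - j.val) * ((i.val : ZMod p) - k.val) = 0 := by
    have h2X : (2 : ZMod p) * (((i.val : ZMod p) - j.val) * ((i.val : ZMod p) - k.val)) = 0 := by
      linear_combination ((i.val : ZMod p) - j.val - k.val - l.val) * e1 + e2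
    exact (mul_eq_zero.mp h2X).resolve_left h2
  have hlift : ∀ x y : Fin n, (x.val : ZMod p) = (y.val : ZMod p) → x = y := by
    intro x y hxy
    have hx := ZMod.val_natCast_of_lt (lt_trans x.isLt hnp)
    have hy := ZMod.val_natCast_of_lt (lt_trans y.isLt hnp)
    have := congrArg ZMod.val hxy
    rw [hx, hy] at this
    exact Fin.ext this
  rcases mul_eq_zero.mp hX with h | h
  · exact absurd (hlift i j (by linear_combination h)) hij
  · have hik : i = k := hlift i k (by linear_combination h)
    refine ⟨hik, ?_⟩
    have : i.val = k.val := congrArg Fin.val hik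
    exact Fin.ext (by omega)


/-- For every `n ≥ 1` and `m > n³` there is an injective `φ : {1,…,n} → ℤ/mℤ` whose
image is a Sidon set: all differences `φ i − φ j` with `i ≠ j` are distinct. -/
theorem exists_sidon_map (n m : ℕ) (hn : 1 ≤ n) (hm : n ^ 3 < m) :
    ∃ φ : Fin n → ZMod m, Function.Injective φ ∧
      ∀ i j k l : Fin n, i ≠ j → k ≠ l → φ i - φ j = φ k - φ l → i = k ∧ j = l := by
  rcases le_or_gt n 7 with h7 | h7
  · refine zmod_sidon_of_nat n m (fun i => mc7 (Fin.castLE h7 i)) ?_ ?_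
    · intro i
      have h1 := mc7_bound (Fin.castLE h7 i)
      have h2 : ((Fin.castLE h7 i).val + 1) ^ 3 ≤ n ^ 3 := by
        refine Nat.pow_le_pow_left ?_ 3
        have : (Fin.castLE h7 i).val = i.val := rfl
        omega
      omega
    · intro i j k l hij hkl heq
      have hij' : Fin.castLE h7 i ≠ Fin.castLE h7 j := by
        intro hc
        exact hij (Fin.ext (by simpa using congrArg Fin.val hc))
      have hkl' : Fin.castLE h7 k ≠ Fin.castLE h7 l := by
        intro hc
        exact hkl (Fin.ext (by simpa using congrArg Fin.val hc))
      have h := mc7_sidon _ _ _ _ hij' hkl' (by omega)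
      constructor
      · exact Fin.ext (by simpa using congrArg Fin.val h.1)
      · exact Fin.ext (by simpa using congrArg Fin.val h.2)
  · obtain ⟨p, hp, hnp, hp2n⟩ := Nat.exists_prime_lt_and_le_two_mul n (by omega)
    refine zmod_sidon_of_nat n m (fun i => 2 * p * i.val + i.val ^ 2 % p) ?_ ?_
    · intro i
      have h1 : i.val ^ 2 % p < p := Nat.mod_lt _ hp.pos
      have h2 : i.val + 1 ≤ n := i.isLt
      have h3 : 4 * (p * i.val) ≤ 4 * (2 * n * i.val) :=
        Nat.mul_le_mul_left 4 (Nat.mul_le_mul_right _ hp2n)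
      have h4 : 8 * (n * (i.val + 1)) ≤ 8 * (n * n) :=
        Nat.mul_le_mul_left 8 (Nat.mul_le_mul_left n h2)
      have h5 : 8 * (n * n) ≤ n ^ 3 := by nlinarith
      nlinarith
    · exact et_sidon n p hp hnp (by omega)
end
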